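/- arXiv:2109.07792 — 7 statements merged into one kernel-verified Lean document; each statement's English description precedes it below -/
import Mathlib

section
/- Let n ≥ 2 and let p = (p_1, ..., p_n) be a probability vector with 0 < p_i ≤ ε for all i, where ε > 0. Then Σ_{i=1}^n log(n p_i) ≤ -(1/(2ε²)) Σ_{i=1}^n (p_i - 1/n)². -/
/-! `log` is `1/ε²`-strongly concave on `(0, ε]`, so it lies below its tangent at any `a ∈ (0, ε]`
by a quadratic margin: `log x ≤ log a + (x - a)/a - (x - a)²/(2ε²)`. (The difference of the two
sides has derivative `(y - a)(a y - ε²)/(a y ε²)`, which changes sign only at `a`.) Take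
`a = 1/n`, which is at most `ε` because the `pᵢ` sum to `1`, and sum over `i`: the tangent terms
cancel since `∑ (pᵢ - 1/n) = 0`. -/

open Finset Set

theorem le_of_hasDerivAt_of_mul_sub_nonpos {f f' : ℝ → ℝ} {a x : ℝ}
    (hf : ∀ y ∈ uIcc x a, HasDerivAt f (f' y) y) (hf' : ∀ y ∈ uIcc x a, (y - a) * f' y ≤ 0) :
    f x ≤ f a := by
  have hcont : ContinuousOn f (uIcc x a) := fun y hy ↦ (hf y hy).continuousAt.continuousWithinAt
  rcases le_total x a with hxa | hax
  · rw [uIcc_of_le hxa] at hf hf' hcont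
    refine monotoneOn_of_hasDerivWithinAt_nonneg (convex_Icc x a) hcont
      (fun y hy ↦ (hf y (interior_subset hy)).hasDerivWithinAt) (fun y hy ↦ ?_)
      (left_mem_Icc.2 hxa) (right_mem_Icc.2 hxa) hxa
    rw [interior_Icc] at hy
    exact nonneg_of_mul_nonpos_right (hf' y (Ioo_subset_Icc_self hy)) (by linarith [hy.2])
  · rw [uIcc_of_ge hax] at hf hf' hcont
    refine antitoneOn_of_hasDerivWithinAt_nonpos (convex_Icc a x) hcont
      (fun y hy ↦ (hf y (interior_subset hy)).hasDerivWithinAt) (fun y hy ↦ ?_)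
      (left_mem_Icc.2 hax) (right_mem_Icc.2 hax) hax
    rw [interior_Icc] at hy
    have := hf' y (Ioo_subset_Icc_self hy)
    nlinarith [hy.1]

theorem Real.log_sub_log_le_div_sub_sq_div {ε a x : ℝ} (ha : 0 < a) (haε : a ≤ ε) (hx : 0 < x)
    (hxε : x ≤ ε) :
    Real.log x - Real.log a ≤ (x - a) / a - (x - a) ^ 2 / (2 * ε ^ 2) := by
  let g : ℝ → ℝ := fun z ↦ Real.log z - (z - a) / a + (z - a) ^ 2 / (2 * ε ^ 2)
  have hpos : ∀ y ∈ uIcc x a, 0 < y := fun y hy ↦ lt_of_lt_of_le (lt_min hx ha) hy.1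
  have hderiv : ∀ y ∈ uIcc x a,
      HasDerivAt g (1 / y - 1 / a + (y - a) / ε ^ 2) y := by
    intro y hy
    have := (((Real.hasDerivAt_log (hpos y hy).ne').sub
      (((hasDerivAt_id' y).sub_const a).div_const a)).add
      ((((hasDerivAt_id' y).sub_const a).pow 2).div_const (2 * ε ^ 2)))
    exact this.congr_deriv (by field_simp; ring)
  have hsign : ∀ y ∈ uIcc x a, (y - a) * (1 / y - 1 / a + (y - a) / ε ^ 2) ≤ 0 := by
    intro y hy
    have hyε : y ≤ ε := hy.2.trans (max_le hxε haε)
    have hy0 := hpos y hy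
    have hε : 0 < ε := ha.trans_le haε
    have hfactor : (y - a) * (1 / y - 1 / a + (y - a) / ε ^ 2)
        = (y - a) ^ 2 * (a * y - ε ^ 2) / (a * y * ε ^ 2) := by
      field_simp; ring
    rw [hfactor]
    apply div_nonpos_of_nonpos_of_nonneg _ (by positivity)
    exact mul_nonpos_of_nonneg_of_nonpos (sq_nonneg _) (by nlinarith)
  have hmax := le_of_hasDerivAt_of_mul_sub_nonpos hderiv hsign
  simp only [g, sub_self, zero_div, sub_zero, ne_eq, OfNat.ofNat_ne_zero, not_false_eq_true,
    zero_pow, add_zero] at hmax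
  linarith

theorem one_le_card_mul_of_sum_eq_one {ι : Type*} [Fintype ι] {p : ι → ℝ} {ε : ℝ}
    (hsum : ∑ i, p i = 1) (hpε : ∀ i, p i ≤ ε) : 1 ≤ Fintype.card ι * ε := by
  simpa [hsum] using Finset.sum_le_card_nsmul univ p ε fun i _ ↦ hpε i

theorem sum_sub_inv_card_eq_zero {ι : Type*} [Fintype ι] {p : ι → ℝ} (hsum : ∑ i, p i = 1) :
    ∑ i, (p i - 1 / Fintype.card ι) = 0 := by
  have : Nonempty ι := by
    by_contra hempty
    simp [not_nonempty_iff.1 hempty] at hsum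
  rw [sum_sub_distrib, hsum]
  simp [Fintype.card_ne_zero]

theorem loglik_quadratic_bound_general (n : ℕ) (ε : ℝ)
    (p : Fin n → ℝ) (hp : ∀ i, 0 < p i) (hpe : ∀ i, p i ≤ ε)
    (hsum : ∑ i, p i = 1) :
    ∑ i, Real.log (n * p i) ≤ -(1 / (2 * ε ^ 2)) * ∑ i, (p i - 1 / n) ^ 2 := by
  have hnε : 1 ≤ n * ε := by simpa using one_le_card_mul_of_sum_eq_one hsum hpe
  have hn : (0 : ℝ) < n :=
    Nat.cast_pos.2 <| Nat.pos_of_ne_zero fun h0 ↦ by norm_num [h0] at hnε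
  have ha : (0 : ℝ) < 1 / n := by positivity
  have haε : 1 / n ≤ ε := by rwa [div_le_iff₀ hn, mul_comm]
  have hmean : ∑ i, (p i - 1 / n) = 0 := by simpa using sum_sub_inv_card_eq_zero hsum
  calc ∑ i, Real.log (n * p i)
      = ∑ i, (Real.log (p i) - Real.log (1 / n)) := by
        refine sum_congr rfl fun i _ ↦ ?_
        rw [← Real.log_div (hp i).ne' ha.ne', one_div, div_inv_eq_mul, mul_comm]
    _ ≤ ∑ i, ((p i - 1 / n) / (1 / n) - (p i - 1 / n) ^ 2 / (2 * ε ^ 2)) :=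
        sum_le_sum fun i _ ↦ Real.log_sub_log_le_div_sub_sq_div ha haε (hp i) (hpe i)
    _ = (∑ i, (p i - 1 / n)) / (1 / n) - (∑ i, (p i - 1 / n) ^ 2) / (2 * ε ^ 2) := by
        rw [sum_sub_distrib, ← sum_div, ← sum_div]
    _ = -(1 / (2 * ε ^ 2)) * ∑ i, (p i - 1 / n) ^ 2 := by
        rw [hmean]; ring

/-- If `p` is a probability vector with all coordinates in `(0, ε]`, then the
log-likelihood ratio against the uniform weights is bounded by a negative quadratic:
`∑ log (n pᵢ) ≤ -(1/(2ε²)) ∑ (pᵢ - 1/n)²`. -/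
theorem loglik_quadratic_bound (n : ℕ) (hn : 2 ≤ n) (ε : ℝ) (hε : 0 < ε)
    (p : Fin n → ℝ) (hp : ∀ i, 0 < p i) (hpe : ∀ i, p i ≤ ε)
    (hsum : ∑ i, p i = 1) :
    ∑ i, Real.log (n * p i) ≤ -(1 / (2 * ε ^ 2)) * ∑ i, (p i - 1 / n) ^ 2 :=
  loglik_quadratic_bound_general n ε p hp hpe hsum
end

section
/- Let n ≥ 2 and d ≥ 1, and let p = (p_1, ..., p_n) be a probability vector. If max_i p_i ≥ 2d(log n)/n and n is large enough (n ≥ N(d) for some N(d) depending only on d), then -n log n - Σ_{i=1}^n log p_i ≥ d log n. Equivalently, Σ_{i=1}^n log(n p_i) ≤ -d log n. -/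
/-- If a probability vector `p` on `n ≥ N(d)` atoms has some coordinate at least
`2 d log n / n`, then `∑ log (n pᵢ) ≤ -d log n`, equivalently
`-n log n - ∑ log pᵢ ≥ d log n`. -/
theorem loglik_drop_of_large_max (d : ℕ) (hd : 1 ≤ d) :
    ∃ N : ℕ, ∀ n : ℕ, N ≤ n → ∀ p : Fin n → ℝ, (∀ i, 0 < p i) → (∑ i, p i = 1) →
      (∃ i, 2 * d * Real.log n / n ≤ p i) →
      (-(n * Real.log n) - ∑ i, Real.log (p i) ≥ d * Real.log n) ∧
        ∑ i, Real.log (n * p i) ≤ -(d * Real.log n) := by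
  refine ⟨200, ?_⟩
  rintro n hn p hp hsum ⟨i0, hi0⟩
  have hn0 : (0:ℝ) < n := by
    have : 0 < n := by omega
    exact_mod_cast this
  have h200 : (200:ℝ) ≤ n := by exact_mod_cast hn
  have hd1 : (1:ℝ) ≤ d := by exact_mod_cast hd
  -- log n ≥ 5
  have hexp5 : Real.exp 5 ≤ 200 := by
    have h5 : Real.exp 5 = Real.exp 1 ^ (5:ℕ) := by
      rw [← Real.exp_nat_mul]; norm_num
    have h := Real.exp_one_lt_d9
    calc Real.exp 5 = Real.exp 1 ^ (5:ℕ) := h5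
      _ ≤ (2.7182818286:ℝ) ^ (5:ℕ) := by
          exact pow_le_pow_left₀ (Real.exp_pos 1).le h.le 5
      _ ≤ 200 := by norm_num
  have hlogn : (5:ℝ) ≤ Real.log n :=
    (Real.le_log_iff_exp_le hn0).2 (hexp5.trans h200)
  -- t = n * p i0
  set t : ℝ := (n:ℝ) * p i0 with ht_def
  have htpos : 0 < t := mul_pos hn0 (hp i0)
  have ht : 2 * d * Real.log n ≤ t := by
    have := (div_le_iff₀ hn0).1 hi0
    nlinarith [this]
  -- log t ≤ 2/5 * t
  have he : (5/2:ℝ) ≤ Real.exp 1 := by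
    have := Real.exp_one_gt_d9
    linarith
  have hlogt : Real.log t ≤ 2/5 * t := by
    have h1 : Real.log (t / Real.exp 1) ≤ t / Real.exp 1 - 1 :=
      Real.log_le_sub_one_of_pos (by positivity)
    rw [Real.log_div (ne_of_gt htpos) (Real.exp_ne_zero 1), Real.log_exp] at h1
    have h2 : t / Real.exp 1 ≤ t / (5/2) := by
      gcongr
    have h3 : t / (5/2) = 2/5 * t := by ring
    linarith
  have hmem : i0 ∈ (Finset.univ : Finset (Fin n)) := Finset.mem_univ i0
  have hsum' : ∑ i ∈ Finset.univ.erase i0, p i = 1 - p i0 := by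
    have := Finset.add_sum_erase Finset.univ p hmem
    linarith
  have hcard : (((Finset.univ : Finset (Fin n)).erase i0).card : ℝ) = (n:ℝ) - 1 := by
    rw [Finset.card_erase_of_mem hmem, Finset.card_univ, Fintype.card_fin]
    have h1n : 1 ≤ n := by omega
    push_cast [h1n]
    ring
  have hbound : ∑ i ∈ Finset.univ.erase i0, Real.log ((n:ℝ) * p i)
      ≤ ∑ i ∈ Finset.univ.erase i0, ((n:ℝ) * p i - 1) :=
    Finset.sum_le_sum fun i _ => Real.log_le_sub_one_of_pos (mul_pos hn0 (hp i))
  have hsum2 : ∑ i ∈ Finset.univ.erase i0, ((n:ℝ) * p i - 1) = 1 - t := by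
    rw [Finset.sum_sub_distrib, ← Finset.mul_sum, hsum', Finset.sum_const,
      nsmul_eq_mul, hcard]
    ring
  have hsplit0 : ∑ i, Real.log ((n:ℝ) * p i)
      = Real.log t + ∑ i ∈ Finset.univ.erase i0, Real.log ((n:ℝ) * p i) :=
    (Finset.add_sum_erase _ _ hmem).symm
  have hdlog : (5:ℝ) ≤ d * Real.log n := by nlinarith
  have hSbound : ∑ i, Real.log ((n:ℝ) * p i) ≤ -(d * Real.log n) := by
    rw [hsplit0]
    linarith
  have hS : ∑ i, Real.log ((n:ℝ) * p i) = (n:ℝ) * Real.log n + ∑ i, Real.log (p i) := by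
    have : ∀ i, Real.log ((n:ℝ) * p i) = Real.log n + Real.log (p i) := fun i =>
      Real.log_mul (ne_of_gt hn0) (ne_of_gt (hp i))
    simp_rw [this, Finset.sum_add_distrib, Finset.sum_const, Finset.card_univ,
      Fintype.card_fin, nsmul_eq_mul]
  exact ⟨by linarith, hSbound⟩
end

section
/- Let t_1, ..., t_n be real numbers with |t_i| ≤ B for all i, suppose at least m of the indices satisfy t_i ≥ c for constants c > 0, B > 0, m ≥ 1, and suppose s ≥ 0 satisfies Σ_{i=1}^n exp(s t_i) t_i = 0. Then (m/n) · c · exp(s c) ≤ B, and consequently s ≤ (1/c) log(B n / (m c)). -/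
open Finset

/-- If `|tᵢ| ≤ B`, at least `m ≥ 1` indices satisfy `tᵢ ≥ c > 0`, `s ≥ 0`, and
`∑ exp(s tᵢ) tᵢ = 0`, then `(m/n) c e^{sc} ≤ B` and `s ≤ (1/c) log (B n/(m c))`. -/
theorem lagrange_multiplier_bound (n m : ℕ) (t : Fin n → ℝ) (B c s : ℝ)
    (hB : 0 < B) (hc : 0 < c) (hm : 1 ≤ m) (hs : 0 ≤ s)
    (hbd : ∀ i, |t i| ≤ B)
    (hcard : m ≤ (Finset.univ.filter (fun i => c ≤ t i)).card)
    (hcrit : ∑ i, Real.exp (s * t i) * t i = 0) :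
    (m / n : ℝ) * c * Real.exp (s * c) ≤ B ∧
      s ≤ (1 / c) * Real.log (B * n / (m * c)) := by
  set S := Finset.univ.filter (fun i : Fin n => c ≤ t i) with hS
  have hn : 1 ≤ n := by
    have := hcard.trans (card_le_card (subset_univ S))
    simpa [card_univ] using hm.trans this
  have hnpos : (0 : ℝ) < n := by exact_mod_cast hn
  have hkey : (m : ℝ) * c * Real.exp (s * c) ≤ n * B := by
    have hsplit : ∑ i ∈ S, Real.exp (s * t i) * t i
        + ∑ i ∈ Sᶜ, Real.exp (s * t i) * t i = 0 := by
      rw [Finset.sum_add_sum_compl]; exact hcrit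
    have h1 : (m : ℝ) * (c * Real.exp (s * c)) ≤ ∑ i ∈ S, Real.exp (s * t i) * t i := by
      have : ∀ i ∈ S, c * Real.exp (s * c) ≤ Real.exp (s * t i) * t i := by
        intro i hi
        have hti : c ≤ t i := by simpa [hS] using hi
        have he : Real.exp (s * c) ≤ Real.exp (s * t i) :=
          Real.exp_le_exp.2 (mul_le_mul_of_nonneg_left hti hs)
        calc c * Real.exp (s * c) ≤ t i * Real.exp (s * t i) :=
              mul_le_mul hti he (Real.exp_pos _).le (hc.le.trans hti)
          _ = Real.exp (s * t i) * t i := mul_comm _ _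
      calc (m : ℝ) * (c * Real.exp (s * c))
          ≤ (S.card : ℝ) * (c * Real.exp (s * c)) := by
            apply mul_le_mul_of_nonneg_right
            · exact_mod_cast hcard
            · positivity
        _ = ∑ i ∈ S, c * Real.exp (s * c) := by rw [Finset.sum_const, nsmul_eq_mul]
        _ ≤ _ := Finset.sum_le_sum this
    have h2 : -(n : ℝ) * B ≤ ∑ i ∈ Sᶜ, Real.exp (s * t i) * t i := by
      have : ∀ i ∈ Sᶜ, -B ≤ Real.exp (s * t i) * t i := by
        intro i _
        rcases le_or_gt 0 (t i) with h | h
        · have : (0:ℝ) ≤ Real.exp (s * t i) * t i := by positivity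
          linarith
        · have he : Real.exp (s * t i) ≤ 1 := by
            apply Real.exp_le_one_iff.2
            exact mul_nonpos_of_nonneg_of_nonpos hs h.le
          have : Real.exp (s * t i) * t i ≥ 1 * t i := by
            have := (Real.exp_pos (s * t i)).le
            nlinarith
          have hb := (abs_le.1 (hbd i)).1
          linarith
      calc -(n : ℝ) * B ≤ (Sᶜ.card : ℝ) * (-B) := by
            have : (Sᶜ.card : ℝ) ≤ n := by
              exact_mod_cast (card_le_card (subset_univ Sᶜ)).trans_eq (by simp)
            nlinarith
        _ = ∑ i ∈ Sᶜ, (-B) := by rw [Finset.sum_const, nsmul_eq_mul]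
        _ ≤ _ := Finset.sum_le_sum this
    nlinarith
  have hmc : (0:ℝ) < m * c := by
    have : (0:ℝ) < m := by exact_mod_cast hm
    positivity
  constructor
  · rw [div_mul_eq_mul_div, div_mul_eq_mul_div, div_le_iff₀ hnpos]
    nlinarith
  · have hexp : Real.exp (s * c) ≤ B * n / (m * c) := by
      rw [le_div_iff₀ hmc]
      nlinarith
    have hlog := Real.log_le_log (Real.exp_pos _) hexp
    rw [Real.log_exp] at hlog
    rw [one_div, inv_mul_eq_div, le_div_iff₀ hc]
    linarith
end

section
/- Let Z be a random vector in ℝ^d with E[Z] = 0, E[Z Z^T] ≽ a I_d for some a > 0, and ‖Z‖₂ ≤ b almost surely for some b > 0. Then for every unit vector λ ∈ S^{d-1}, P(λ^T Z ≥ c₂) ≥ c₃, where c₂ = min(√(a/8), a/(8b)) and c₃ = a/(16 b²). -/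
/-!
Project onto `λ`: `X = ⟪λ, Z⟫` is centered with `|X| ≤ b` and `E X² ≥ a`. Since `X² ≤ b |X|` and
`E |X| = 2 E X⁺` for a centered variable, `a ≤ 2 b E X⁺`; and `X⁺ ≤ c₂ + b 𝟙{X ≥ c₂}`. Hence
`a ≤ 2 b c₂ + 2 b² P(X ≥ c₂)`, and `b c₂ ≤ a / 8` gives `P(X ≥ c₂) ≥ 3a / (8 b²)`.
-/

open MeasureTheory

namespace MeasureTheory

variable {Ω : Type*} [MeasurableSpace Ω] {μ : Measure Ω} {X : Ω → ℝ} {b c : ℝ}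

lemma integral_sq_le_two_mul_integral_posPart (hX : Integrable X μ) (hmean : ∫ ω, X ω ∂μ = 0)
    (hbdd : ∀ᵐ ω ∂μ, |X ω| ≤ b) :
    ∫ ω, X ω ^ 2 ∂μ ≤ 2 * b * ∫ ω, (X ω)⁺ ∂μ := by
  have hpos : Integrable (fun ω ↦ (X ω)⁺) μ := hX.pos_part
  have habs (x : ℝ) : |x| = 2 * x⁺ - x := by
    rw [← posPart_add_negPart x]; linarith [posPart_sub_negPart x]
  calc ∫ ω, X ω ^ 2 ∂μ ≤ ∫ ω, b * (2 * (X ω)⁺ - X ω) ∂μ := by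
        refine integral_mono_of_nonneg (.of_forall fun ω ↦ sq_nonneg _)
          (((hpos.const_mul 2).sub hX).const_mul b) ?_
        filter_upwards [hbdd] with ω hω
        rw [← habs, ← sq_abs]
        nlinarith [abs_nonneg (X ω)]
    _ = 2 * b * ∫ ω, (X ω)⁺ ∂μ := by
        rw [integral_const_mul, integral_sub (hpos.const_mul 2) hX, integral_const_mul, hmean]
        ring

lemma integral_posPart_le_add_mul_measureReal [IsProbabilityMeasure μ] (hX : Measurable X)
    (hc : 0 ≤ c) (hbdd : ∀ᵐ ω ∂μ, X ω ≤ b) :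
    ∫ ω, (X ω)⁺ ∂μ ≤ c + b * μ.real {ω | c ≤ X ω} := by
  have hA : MeasurableSet {ω | c ≤ X ω} := measurableSet_le measurable_const hX
  have hind : Integrable ({ω | c ≤ X ω}.indicator (1 : Ω → ℝ)) μ :=
    (integrable_const 1).indicator hA
  calc ∫ ω, (X ω)⁺ ∂μ ≤ ∫ ω, c + b * {ω | c ≤ X ω}.indicator 1 ω ∂μ := by
        refine integral_mono_of_nonneg (.of_forall fun ω ↦ posPart_nonneg _)
          ((integrable_const c).add (hind.const_mul b)) ?_
        filter_upwards [hbdd] with ω hω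
        by_cases h : c ≤ X ω
        · simp only [Set.indicator_of_mem (show ω ∈ {ω | c ≤ X ω} from h), Pi.one_apply]
          exact sup_le (by linarith) (by linarith)
        · simp only [Set.indicator_of_notMem (show ω ∉ {ω | c ≤ X ω} from h), mul_zero,
            add_zero]
          exact sup_le (by linarith) hc
    _ = c + b * μ.real {ω | c ≤ X ω} := by
        rw [integral_add (integrable_const c) (hind.const_mul b),
          integral_const_mul, integral_indicator_one hA]
        simp

end MeasureTheory

/-- Anti-concentration (Lemma 3, centered case): a bounded, centered random vector `Z`
with covariance `E[Z Zᵀ] ≽ a I` satisfies `P(λᵀZ ≥ c₂) ≥ c₃` for every unit vector `λ`,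
with `c₂ = min(√(a/8), a/(8b))` and `c₃ = a/(16 b²)`. -/
theorem anti_concentration {Ω : Type*} [MeasurableSpace Ω] (μ : Measure Ω)
    [IsProbabilityMeasure μ]
    {d : ℕ} (Z : Ω → EuclideanSpace ℝ (Fin d)) (hZ : Measurable Z)
    (a b : ℝ) (ha : 0 < a) (hb : 0 < b)
    (hmean : ∫ ω, Z ω ∂μ = 0)
    (hbdd : ∀ᵐ ω ∂μ, ‖Z ω‖ ≤ b)
    (hcov : ∀ v : EuclideanSpace ℝ (Fin d), a * ‖v‖ ^ 2 ≤ ∫ ω, (inner ℝ v (Z ω) : ℝ) ^ 2 ∂μ) :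
    ∀ lam : EuclideanSpace ℝ (Fin d), ‖lam‖ = 1 →
      ENNReal.ofReal (a / (16 * b ^ 2))
        ≤ μ {ω | min (Real.sqrt (a / 8)) (a / (8 * b)) ≤ (inner ℝ lam (Z ω) : ℝ)} := by
  intro lam hlam
  set c := min (Real.sqrt (a / 8)) (a / (8 * b))
  set X : Ω → ℝ := fun ω ↦ inner ℝ lam (Z ω)
  have hX : Measurable X := (innerSL ℝ lam).continuous.measurable.comp hZ
  have hXbdd : ∀ᵐ ω ∂μ, |X ω| ≤ b := by
    filter_upwards [hbdd] with ω hω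
    exact (abs_real_inner_le_norm lam (Z ω)).trans (by rwa [hlam, one_mul])
  have hXint : Integrable X μ := .of_bound hX.aestronglyMeasurable b (by simpa using hXbdd)
  have hXmean : ∫ ω, X ω ∂μ = 0 := by
    simpa [hmean] using (innerSL ℝ lam).integral_comp_comm
      (Integrable.of_bound hZ.aestronglyMeasurable b hbdd)
  have hvar : a ≤ ∫ ω, X ω ^ 2 ∂μ := by simpa [hlam] using hcov lam
  have hc : 0 ≤ c := le_min (Real.sqrt_nonneg _) (by positivity)
  have hbc : b * c ≤ a / 8 := by
    have : c * (8 * b) ≤ a := (le_div_iff₀ (by positivity)).1 (min_le_right _ _)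
    linarith
  have hXle : ∀ᵐ ω ∂μ, X ω ≤ b := hXbdd.mono fun _ h ↦ (abs_le.1 h).2
  have hmoment := (integral_sq_le_two_mul_integral_posPart hXint hXmean hXbdd).trans
    (mul_le_mul_of_nonneg_left (integral_posPart_le_add_mul_measureReal hX hc hXle)
      (by positivity))
  rw [← ofReal_measureReal]
  gcongr
  rw [div_le_iff₀ (by positivity)]
  linarith
end

section
/- Let (X̃, Y) be a random pair with X̃ ∈ ℝ^d, ‖X̃‖₂ ≤ M almost surely, and suppose that for every x̃ in the support and every t ∈ ℝ, the conditional density p(t | X̃ = x̃) of Y exists and is bounded by a constant K. Fix τ ∈ (0,1) and define g(x̃, y, θ) = (1{y < x̃^T θ} - τ) x̃ and Δ_θ = E[g(X̃, Y, θ) g(X̃, Y, θ)^T]. Then for all θ, θ' ∈ ℝ^d, ‖Δ_θ - Δ_{θ'}‖_F ≤ K M³ ‖θ - θ'‖₂, and E[‖g(X̃,Y,θ) - g(X̃,Y,θ')‖₂²] ≤ K M³ ‖θ - θ'‖₂. -/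
/-!
Both quantities are dominated pointwise by `|1{Y < ⟪θ, X⟫} - 1{Y < ⟪θ', X⟫}| * ‖X‖²`, which equals
`‖X‖² ≤ M²` on the band where `Y` lies between `⟪θ, X⟫` and `⟪θ', X⟫` and zero off it; for the
covariance this uses Minkowski's inequality `‖∫ F‖_F ≤ ∫ ‖F‖_F` and
`‖α² x xᵀ - β² x xᵀ‖_F = |α² - β²| ‖x‖²`. Given `X = x`, the band is an interval of length
`|⟪θ - θ', x⟫| ≤ M ‖θ - θ'‖`, so its probability is at most `K M ‖θ - θ'‖`. Since the
disintegration is only given on rectangles, the band is covered by countably many rectangles, with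
an error that vanishes with the mesh.
-/

open Set Filter Topology MeasureTheory
open scoped RealInnerProductSpace

noncomputable def ltIndicator (y t : ℝ) : ℝ := if y < t then 1 else 0

theorem abs_ltIndicator_sub_ltIndicator (y s t : ℝ) :
    |ltIndicator y s - ltIndicator y t| = (Ico (min s t) (max s t)).indicator 1 y := by
  unfold ltIndicator
  by_cases hs : y < s <;> by_cases ht : y < t <;>
    simp [hs, ht, indicator, not_lt.1]

theorem abs_ltIndicator_sub_ltIndicator_le_one (y s t : ℝ) :
    |ltIndicator y s - ltIndicator y t| ≤ 1 := by
  unfold ltIndicator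
  split_ifs <;> norm_num

theorem abs_ltIndicator_sub_le_one {τ : ℝ} (hτ : τ ∈ Icc 0 1) (y t : ℝ) :
    |ltIndicator y t - τ| ≤ 1 := by
  unfold ltIndicator
  split_ifs <;> rw [abs_le] <;> constructor <;> linarith [hτ.1, hτ.2]

theorem abs_sq_sub_sq_ltIndicator_le {τ : ℝ} (hτ : τ ∈ Icc 0 1) (y s t : ℝ) :
    |(ltIndicator y s - τ) ^ 2 - (ltIndicator y t - τ) ^ 2| ≤
      |ltIndicator y s - ltIndicator y t| := by
  unfold ltIndicator
  split_ifs <;> norm_num <;> rw [abs_le] <;> constructor <;> nlinarith [hτ.1, hτ.2]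

theorem sqrt_sum_sum_sq_smul_mul_sub {ι : Type*} [Fintype ι] (α β : ℝ) (x : EuclideanSpace ℝ ι) :
    √(∑ i, ∑ j, ((α • x) i * (α • x) j - (β • x) i * (β • x) j) ^ 2) =
      |α ^ 2 - β ^ 2| * ‖x‖ ^ 2 := by
  have hsum : ∑ i, ∑ j, ((α • x) i * (α • x) j - (β • x) i * (β • x) j) ^ 2 =
      (|α ^ 2 - β ^ 2| * ‖x‖ ^ 2) ^ 2 := by
    simp_rw [mul_pow, sq_abs, EuclideanSpace.real_norm_sq_eq, sq (∑ i, _), Finset.sum_mul_sum,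
      Finset.mul_sum, PiLp.smul_apply, smul_eq_mul]
    exact Finset.sum_congr rfl fun i _ => Finset.sum_congr rfl fun j _ => by ring
  rw [hsum, Real.sqrt_sq (by positivity)]

section Integral

variable {Ω : Type*} [MeasurableSpace Ω] {μ : Measure Ω}

theorem sqrt_sum_sum_sq_integral_le {ι κ : Type*} [Fintype ι] [Fintype κ] {F : Ω → ι → κ → ℝ}
    (hF : ∀ i j, Integrable (fun ω => F ω i j) μ) :
    √(∑ i, ∑ j, (∫ ω, F ω i j ∂μ) ^ 2) ≤ ∫ ω, √(∑ i, ∑ j, F ω i j ^ 2) ∂μ := by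
  let V : Ω → EuclideanSpace ℝ (ι × κ) := fun ω => WithLp.toLp 2 fun p => F ω p.1 p.2
  have hV (p : ι × κ) : Integrable (fun ω => V ω p) μ := hF p.1 p.2
  have hnorm (v : EuclideanSpace ℝ (ι × κ)) : ‖v‖ = √(∑ i, ∑ j, v (i, j) ^ 2) := by
    simp [EuclideanSpace.norm_eq, Fintype.sum_prod_type]
  calc √(∑ i, ∑ j, (∫ ω, F ω i j ∂μ) ^ 2) = ‖∫ ω, V ω ∂μ‖ := by
        rw [hnorm]; simp_rw [eval_integral_piLp hV]; rfl
    _ ≤ ∫ ω, ‖V ω‖ ∂μ := norm_integral_le_integral_norm _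
    _ = ∫ ω, √(∑ i, ∑ j, F ω i j ^ 2) ∂μ := by simp_rw [hnorm]; rfl

theorem integrable_apply_mul_apply [IsFiniteMeasure μ] {ι : Type*} [Fintype ι]
    {f : Ω → EuclideanSpace ℝ ι} (hf : Measurable f) {C : ℝ} (hfC : ∀ᵐ ω ∂μ, ‖f ω‖ ≤ C)
    (i j : ι) : Integrable (fun ω => f ω i * f ω j) μ := by
  refine Integrable.of_bound (by fun_prop) (C * C) ?_
  filter_upwards [hfC] with ω hω
  rw [norm_mul]
  exact mul_le_mul ((PiLp.norm_apply_le _ i).trans hω) ((PiLp.norm_apply_le _ j).trans hω)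
    (norm_nonneg _) ((norm_nonneg _).trans hω)

end Integral

section Band

variable {Ω E : Type*} [MeasurableSpace Ω] [MeasurableSpace E] {μ : Measure Ω}
  {X : Ω → E} {Y : Ω → ℝ} {κ : E → Measure ℝ} {K : ℝ} {lo hi : E → ℝ} {s : Set E} {L : ℝ}

theorem measure_mem_Ico_le_add [IsProbabilityMeasure μ] (hX : Measurable X)
    (hdis : ∀ (A : Set E) (B : Set ℝ), MeasurableSet A → MeasurableSet B →
      μ {ω | X ω ∈ A ∧ Y ω ∈ B} = ∫⁻ x in A, κ x B ∂(μ.map X))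
    (hK : 0 ≤ K) (hdens : ∀ x a b, a ≤ b → κ x (Ioc a b) ≤ ENNReal.ofReal (K * (b - a)))
    (hlo : Measurable lo) (hhi : Measurable hi) (hs : MeasurableSet s)
    (hL : ∀ x ∈ s, hi x - lo x ≤ L) {δ : ℝ} (hδ : 0 < δ) :
    μ {ω | X ω ∈ s ∧ Y ω ∈ Ico (lo (X ω)) (hi (X ω))} ≤ ENNReal.ofReal (K * (L + 3 * δ)) := by
  have floor_bounds (r : ℝ) : ⌊r / δ⌋ * δ ≤ r ∧ r < (⌊r / δ⌋ + 1) * δ :=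
    ⟨(le_div_iff₀ hδ).1 (Int.floor_le _), (div_lt_iff₀ hδ).1 (Int.lt_floor_add_one _)⟩
  have hκ_Ioc (x : E) (a b : ℝ) : κ x (Ioc a b) ≤ ENNReal.ofReal (K * (b - a)) := by
    rcases le_or_gt a b with hab | hab
    · exact hdens x a b hab
    · simp [Ioc_eq_empty_of_le hab.le]
  -- Grid cells of mesh `δ` in the values of `(lo, hi)`; on each, `Y` lies in one short interval.
  let cell : E → ℤ × ℤ := fun x => (⌊lo x / δ⌋, ⌊hi x / δ⌋)
  have hcell : Measurable cell := (hlo.div_const δ).floor.prodMk (hhi.div_const δ).floor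
  let C : ℤ × ℤ → Set E := fun p => s ∩ cell ⁻¹' {p}
  have hC (p : ℤ × ℤ) : MeasurableSet (C p) := hs.inter (hcell (measurableSet_singleton p))
  let I : ℤ × ℤ → Set ℝ := fun p => Ioc ((p.1 - 1) * δ) ((p.2 + 1) * δ)
  have hcover : {ω | X ω ∈ s ∧ Y ω ∈ Ico (lo (X ω)) (hi (X ω))} ⊆
      ⋃ p, {ω | X ω ∈ C p ∧ Y ω ∈ I p} := by
    rintro ω ⟨hXs, hlo_le, hlt_hi⟩
    refine mem_iUnion.2 ⟨cell (X ω), ⟨hXs, rfl⟩, ?_, ?_⟩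
    · linarith [(floor_bounds (lo (X ω))).1]
    · linarith [(floor_bounds (hi (X ω))).2]
  have hκ (p : ℤ × ℤ) : ∀ x ∈ C p, κ x (I p) ≤ ENNReal.ofReal (K * (L + 3 * δ)) := by
    rintro x ⟨hxs, hxp⟩
    obtain rfl : cell x = p := hxp
    refine (hκ_Ioc x _ _).trans (ENNReal.ofReal_le_ofReal (mul_le_mul_of_nonneg_left ?_ hK))
    linarith [floor_bounds (lo x), floor_bounds (hi x), hL x hxs]
  have hdisj : Pairwise (Function.onFun Disjoint C) := fun p q hpq =>
    ((disjoint_singleton.2 hpq).preimage cell).mono inter_subset_right inter_subset_right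
  have hunion : ⋃ p, C p = s := by
    ext x
    simp [C]
  calc μ {ω | X ω ∈ s ∧ Y ω ∈ Ico (lo (X ω)) (hi (X ω))}
      ≤ ∑' p, μ {ω | X ω ∈ C p ∧ Y ω ∈ I p} := (measure_mono hcover).trans (measure_iUnion_le _)
    _ = ∑' p, ∫⁻ x in C p, κ x (I p) ∂(μ.map X) := by
        simp_rw [fun p => hdis (C p) (I p) (hC p) measurableSet_Ioc]
    _ ≤ ∑' p, ENNReal.ofReal (K * (L + 3 * δ)) * μ.map X (C p) := ENNReal.tsum_le_tsum fun p =>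
        (setLIntegral_mono measurable_const (hκ p)).trans_eq (setLIntegral_const _ _)
    _ = ENNReal.ofReal (K * (L + 3 * δ)) * μ.map X s := by
        rw [ENNReal.tsum_mul_left, ← measure_iUnion hdisj hC, hunion]
    _ ≤ ENNReal.ofReal (K * (L + 3 * δ)) := by
        have : IsProbabilityMeasure (μ.map X) := Measure.isProbabilityMeasure_map hX.aemeasurable
        exact mul_le_of_le_one_right' prob_le_one

theorem measure_mem_Ico_le [IsProbabilityMeasure μ] (hX : Measurable X)
    (hdis : ∀ (A : Set E) (B : Set ℝ), MeasurableSet A → MeasurableSet B →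
      μ {ω | X ω ∈ A ∧ Y ω ∈ B} = ∫⁻ x in A, κ x B ∂(μ.map X))
    (hK : 0 ≤ K) (hdens : ∀ x a b, a ≤ b → κ x (Ioc a b) ≤ ENNReal.ofReal (K * (b - a)))
    (hlo : Measurable lo) (hhi : Measurable hi) (hs : MeasurableSet s)
    (hL : ∀ x ∈ s, hi x - lo x ≤ L) :
    μ {ω | X ω ∈ s ∧ Y ω ∈ Ico (lo (X ω)) (hi (X ω))} ≤ ENNReal.ofReal (K * L) := by
  have hlim : Tendsto (fun δ : ℝ => ENNReal.ofReal (K * (L + 3 * δ))) (𝓝[>] 0)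
      (𝓝 (ENNReal.ofReal (K * L))) := by
    refine ENNReal.tendsto_ofReal (tendsto_nhdsWithin_of_tendsto_nhds ?_)
    have hcont : Continuous fun δ : ℝ => K * (L + 3 * δ) := by fun_prop
    simpa using hcont.tendsto 0
  exact ge_of_tendsto hlim (eventually_nhdsWithin_of_forall fun δ hδ =>
    measure_mem_Ico_le_add hX hdis hK hdens hlo hhi hs hL hδ)

end Band

section Quantile

variable {E : Type*} [NormedAddCommGroup E] [InnerProductSpace ℝ E]

noncomputable def quantileScore (τ : ℝ) (x : E) (y : ℝ) (θ : E) : E :=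
  (ltIndicator y ⟪θ, x⟫ - τ) • x

theorem norm_quantileScore_le {τ : ℝ} (hτ : τ ∈ Icc 0 1) (x : E) (y : ℝ) (θ : E) :
    ‖quantileScore τ x y θ‖ ≤ ‖x‖ := by
  rw [quantileScore, norm_smul, Real.norm_eq_abs]
  exact mul_le_of_le_one_left (norm_nonneg x) (abs_ltIndicator_sub_le_one hτ y _)

theorem norm_quantileScore_sub_sq_le (τ : ℝ) (x : E) (y : ℝ) (θ θ' : E) :
    ‖quantileScore τ x y θ - quantileScore τ x y θ'‖ ^ 2 ≤
      |ltIndicator y ⟪θ, x⟫ - ltIndicator y ⟪θ', x⟫| * ‖x‖ ^ 2 := by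
  rw [quantileScore, quantileScore, ← sub_smul, sub_sub_sub_cancel_right, norm_smul,
    Real.norm_eq_abs, mul_pow, sq]
  gcongr
  exact mul_le_of_le_one_left (abs_nonneg _) (abs_ltIndicator_sub_ltIndicator_le_one y _ _)

theorem sqrt_sum_sum_quantileScore_le {ι : Type*} [Fintype ι] {τ : ℝ} (hτ : τ ∈ Icc 0 1)
    (x : EuclideanSpace ℝ ι) (y : ℝ) (θ θ' : EuclideanSpace ℝ ι) :
    √(∑ i, ∑ j, (quantileScore τ x y θ i * quantileScore τ x y θ j -
        quantileScore τ x y θ' i * quantileScore τ x y θ' j) ^ 2) ≤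
      |ltIndicator y ⟪θ, x⟫ - ltIndicator y ⟪θ', x⟫| * ‖x‖ ^ 2 := by
  rw [quantileScore, quantileScore, sqrt_sum_sum_sq_smul_mul_sub]
  exact mul_le_mul_of_nonneg_right (abs_sq_sub_sq_ltIndicator_le hτ y _ _) (by positivity)

variable [MeasurableSpace E] {Ω : Type*} [MeasurableSpace Ω] {μ : Measure Ω}
  {X : Ω → E} {Y : Ω → ℝ}

theorem measurable_quantileScore [SecondCountableTopology E] [BorelSpace E] (hX : Measurable X)
    (hY : Measurable Y) (τ : ℝ) (θ : E) :
    Measurable fun ω => quantileScore τ (X ω) (Y ω) θ :=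
  ((Measurable.ite (measurableSet_lt hY hX.const_inner) measurable_const measurable_const).sub_const
    τ).smul hX

theorem integral_le_of_le_abs_ltIndicator_sub_mul_norm_sq [OpensMeasurableSpace E]
    [IsProbabilityMeasure μ] (hX : Measurable X) (hY : Measurable Y) {M K : ℝ} (hM : 0 ≤ M)
    (hK : 0 ≤ K) (hXbdd : ∀ᵐ ω ∂μ, ‖X ω‖ ≤ M) {κ : E → Measure ℝ}
    (hdis : ∀ (A : Set E) (B : Set ℝ), MeasurableSet A → MeasurableSet B →
      μ {ω | X ω ∈ A ∧ Y ω ∈ B} = ∫⁻ x in A, κ x B ∂(μ.map X))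
    (hdens : ∀ x a b, a ≤ b → κ x (Ioc a b) ≤ ENNReal.ofReal (K * (b - a))) (θ θ' : E)
    {f : Ω → ℝ} (hf0 : 0 ≤ᵐ[μ] f)
    (hf : ∀ᵐ ω ∂μ, f ω ≤ |ltIndicator (Y ω) ⟪θ, X ω⟫ - ltIndicator (Y ω) ⟪θ', X ω⟫| * ‖X ω‖ ^ 2) :
    ∫ ω, f ω ∂μ ≤ K * M ^ 3 * ‖θ - θ'‖ := by
  let lo : E → ℝ := fun x => min ⟪θ, x⟫ ⟪θ', x⟫
  let hi : E → ℝ := fun x => max ⟪θ, x⟫ ⟪θ', x⟫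
  have hlo : Measurable lo := by fun_prop
  have hhi : Measurable hi := by fun_prop
  let A : Set E := {x | ‖x‖ ≤ M}
  have hA : MeasurableSet A := measurableSet_le measurable_norm measurable_const
  have hL (x : E) (hx : x ∈ A) : hi x - lo x ≤ M * ‖θ - θ'‖ := by
    rw [max_sub_min_eq_abs', ← inner_sub_left, mul_comm]
    exact (abs_real_inner_le_norm _ _).trans (by gcongr; exact hx)
  let B : Set Ω := {ω | X ω ∈ A ∧ Y ω ∈ Ico (lo (X ω)) (hi (X ω))}
  have hB : MeasurableSet B :=
    (hX hA).inter ((measurableSet_le (hlo.comp hX) hY).inter (measurableSet_lt hY (hhi.comp hX)))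
  have hμB : μ.real B ≤ K * (M * ‖θ - θ'‖) := ENNReal.toReal_le_of_le_ofReal (by positivity)
    (measure_mem_Ico_le hX hdis hK hdens hlo hhi hA hL)
  have hdom : ∀ᵐ ω ∂μ, f ω ≤ B.indicator (fun _ => M ^ 2) ω := by
    filter_upwards [hf, hXbdd] with ω hfω hω
    refine hfω.trans ?_
    rw [abs_ltIndicator_sub_ltIndicator]
    by_cases hy : Y ω ∈ Ico (lo (X ω)) (hi (X ω))
    · rw [indicator_of_mem hy, indicator_of_mem (show ω ∈ B from ⟨hω, hy⟩), Pi.one_apply, one_mul]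
      exact pow_le_pow_left₀ (norm_nonneg _) hω 2
    · rw [indicator_of_notMem hy, zero_mul]
      exact indicator_nonneg (fun _ _ => sq_nonneg M) ω
  calc ∫ ω, f ω ∂μ ≤ ∫ ω, B.indicator (fun _ => M ^ 2) ω ∂μ :=
        integral_mono_of_nonneg hf0 ((integrable_const _).indicator hB) hdom
    _ = μ.real B * M ^ 2 := by rw [integral_indicator_const _ hB, smul_eq_mul]
    _ ≤ K * (M * ‖θ - θ'‖) * M ^ 2 := by gcongr
    _ = K * M ^ 3 * ‖θ - θ'‖ := by ring

end Quantile

/-- Lipschitz continuity of the quantile-regression score covariance: with bounded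
covariates and conditional density of `Y` given `X̃` bounded by `K` (phrased via a
disintegration kernel `κ`), the matrix `Δ_θ = E[g(·,θ) g(·,θ)ᵀ]` with
`g(x̃,y,θ) = (1{y < x̃ᵀθ} - τ) x̃` satisfies `‖Δ_θ - Δ_θ'‖_F ≤ K M³ ‖θ - θ'‖` and
`E‖g(·,θ) - g(·,θ')‖² ≤ K M³ ‖θ - θ'‖`. -/
theorem quantile_score_cov_lipschitz
    {Ω : Type*} [MeasurableSpace Ω] (μ : Measure Ω) [IsProbabilityMeasure μ]
    {d : ℕ} (X : Ω → EuclideanSpace ℝ (Fin d)) (Y : Ω → ℝ)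
    (hX : Measurable X) (hY : Measurable Y)
    (M K τ : ℝ) (hM : 0 < M) (hK : 0 < K) (hτ : τ ∈ Set.Ioo (0 : ℝ) 1)
    (hXbdd : ∀ᵐ ω ∂μ, ‖X ω‖ ≤ M)
    (κ : EuclideanSpace ℝ (Fin d) → Measure ℝ)
    (hdis : ∀ (A : Set (EuclideanSpace ℝ (Fin d))) (B : Set ℝ),
      MeasurableSet A → MeasurableSet B →
      μ {ω | X ω ∈ A ∧ Y ω ∈ B} = ∫⁻ x in A, κ x B ∂(Measure.map X μ))
    (hdens : ∀ x : EuclideanSpace ℝ (Fin d), ∀ a b : ℝ, a ≤ b →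
      κ x (Set.Ioc a b) ≤ ENNReal.ofReal (K * (b - a)))
    (g : Ω → EuclideanSpace ℝ (Fin d) → EuclideanSpace ℝ (Fin d))
    (hg : ∀ ω θ, g ω θ = ((if Y ω < (inner ℝ θ (X ω) : ℝ) then (1 : ℝ) else 0) - τ) • X ω)
    (Δ : EuclideanSpace ℝ (Fin d) → Matrix (Fin d) (Fin d) ℝ)
    (hΔ : ∀ θ i j, Δ θ i j = ∫ ω, g ω θ i * g ω θ j ∂μ) :
    ∀ θ θ' : EuclideanSpace ℝ (Fin d),
      Real.sqrt (∑ i, ∑ j, (Δ θ i j - Δ θ' i j) ^ 2) ≤ K * M ^ 3 * ‖θ - θ'‖ ∧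
        ∫ ω, ‖g ω θ - g ω θ'‖ ^ 2 ∂μ ≤ K * M ^ 3 * ‖θ - θ'‖ := by
  intro θ θ'
  have hτ' : τ ∈ Icc 0 1 := Ioo_subset_Icc_self hτ
  have hg' (ω : Ω) (θ : EuclideanSpace ℝ (Fin d)) : g ω θ = quantileScore τ (X ω) (Y ω) θ := hg ω θ
  simp_rw [hΔ, hg']
  have hentry (θ : EuclideanSpace ℝ (Fin d)) (i j : Fin d) :
      Integrable (fun ω => quantileScore τ (X ω) (Y ω) θ i * quantileScore τ (X ω) (Y ω) θ j) μ :=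
    integrable_apply_mul_apply (measurable_quantileScore hX hY τ θ)
      (hXbdd.mono fun ω hω => (norm_quantileScore_le hτ' _ _ _).trans hω) i j
  have hbound (f : Ω → ℝ) := integral_le_of_le_abs_ltIndicator_sub_mul_norm_sq (f := f) hX hY
    hM.le hK.le hXbdd hdis hdens θ θ'
  refine ⟨?_, hbound _ (ae_of_all _ fun _ => by positivity)
    (ae_of_all _ fun ω => norm_quantileScore_sub_sq_le τ _ _ θ θ')⟩
  simp_rw [← integral_sub (hentry θ _ _) (hentry θ' _ _)]
  exact (sqrt_sum_sum_sq_integral_le fun i j => (hentry θ i j).sub (hentry θ' i j)).trans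
    (hbound _ (ae_of_all _ fun _ => Real.sqrt_nonneg _)
      (ae_of_all _ fun ω => sqrt_sum_sum_quantileScore_le hτ' _ _ θ θ'))
end

section
/- Let Θ ⊂ ℝ^d, let R: ℝ^d → ℝ be twice continuously differentiable, let θ̃ be an interior point of Θ with ∇R(θ̃) = 0, and let H_θ denote the Hessian of R at θ. Suppose there are constants r > 0 and c > 0 such that the ball B_r(θ̃) ⊂ Θ and for all θ ∈ B_r(θ̃): H_θ^T H_{θ̃}^{-1} ≽ c I_d (i.e., the symmetric part of H_θ H_{θ̃}^{-1} dominates c I_d) and H_θ^T H_θ ≽ c I_d. Then there exists c₀ > 0 (depending only on c and sup_{θ ∈ B_r(θ̃)} ‖H_{θ̃}^{-1}‖_op) such that ‖∇R(θ)‖₂ ≥ c₀ ‖θ - θ̃‖₂ for all θ ∈ B_r(θ̃). -/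
/-!
With `u = θ - θ̃` and `w = H_θ̃⁻¹ u`, the mean value theorem applied to `z ↦ DR(z) w` on the
segment `[θ̃, θ]` gives, since `∇R(θ̃) = 0`, a point `z` with
`⟪∇R(θ), w⟫ = D²R(z)(u, w) = uᵀ H_z H_θ̃⁻¹ u ≥ c ‖u‖²` (the Hessian is symmetric, so `H_z = H_zᵀ`).
As `‖w‖ ≤ ‖H_θ̃⁻¹‖ ‖u‖`, Cauchy–Schwarz yields `‖∇R(θ)‖ ≥ c / ‖H_θ̃⁻¹‖ · ‖u‖`.
-/

open Matrix Metric
open scoped RealInnerProductSpace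

theorem exists_fderiv_sub_eq_fderiv_fderiv {E : Type*} [NormedAddCommGroup E] [NormedSpace ℝ E]
    {f : E → ℝ} (hf : Differentiable ℝ (fderiv ℝ f)) (x y w : E) :
    ∃ z ∈ segment ℝ x y, fderiv ℝ f y w - fderiv ℝ f x w = fderiv ℝ (fderiv ℝ f) z (y - x) w := by
  have hderiv (z : E) : HasFDerivAt (fun z ↦ fderiv ℝ f z w)
      ((ContinuousLinearMap.apply ℝ ℝ w).comp (fderiv ℝ (fderiv ℝ f) z)) z :=
    (ContinuousLinearMap.apply ℝ ℝ w).hasFDerivAt.comp z (hf z).hasFDerivAt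
  exact domain_mvt (fun z _ ↦ (hderiv z).hasFDerivWithinAt) convex_univ trivial trivial

theorem EuclideanSpace.apply_eq_dotProduct_mulVec {𝕜 ι κ : Type*} [RCLike 𝕜]
    [Fintype ι] [DecidableEq ι] [Fintype κ] [DecidableEq κ]
    (B : EuclideanSpace 𝕜 ι →L[𝕜] EuclideanSpace 𝕜 κ →L[𝕜] 𝕜) (M : Matrix ι κ 𝕜)
    (hM : ∀ i j, M i j = B (single i 1) (single j 1)) (u : EuclideanSpace 𝕜 ι)
    (w : EuclideanSpace 𝕜 κ) :
    B u w = WithLp.ofLp u ⬝ᵥ M *ᵥ WithLp.ofLp w := by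
  conv_lhs => rw [← (basisFun ι 𝕜).sum_repr u, ← (basisFun κ 𝕜).sum_repr w]
  simp only [map_sum, map_smul, _root_.sum_apply, _root_.smul_apply,
    basisFun_repr, basisFun_apply, smul_eq_mul, dotProduct, mulVec, hM, Finset.mul_sum]
  rw [Finset.sum_comm]
  exact Finset.sum_congr rfl fun i _ ↦ Finset.sum_congr rfl fun j _ ↦ by ring

section Hessian

variable {ι : Type*} [Fintype ι] [DecidableEq ι] {R : EuclideanSpace ℝ ι → ℝ}
  {x : EuclideanSpace ℝ ι} {H : Matrix ι ι ℝ}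

theorem fderiv_fderiv_apply_eq_dotProduct_hessian
    (hH : ∀ i j, H i j = iteratedFDeriv ℝ 2 R x
      ![EuclideanSpace.single i 1, EuclideanSpace.single j 1])
    (u w : EuclideanSpace ℝ ι) :
    fderiv ℝ (fderiv ℝ R) x u w = WithLp.ofLp u ⬝ᵥ H *ᵥ WithLp.ofLp w :=
  EuclideanSpace.apply_eq_dotProduct_mulVec _ H
    (fun i j ↦ by simp [hH, iteratedFDeriv_two_apply]) u w

theorem transpose_hessian (hR : ContDiffAt ℝ 2 R x)
    (hH : ∀ i j, H i j = iteratedFDeriv ℝ 2 R x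
      ![EuclideanSpace.single i 1, EuclideanSpace.single j 1]) :
    Hᵀ = H := by
  ext i j
  rw [transpose_apply, hH, hH]
  exact (hR.isSymmSndFDerivAt (by simp)).iteratedFDeriv_cons

end Hessian

theorem le_norm_of_mul_norm_sq_le_inner {E : Type*} [NormedAddCommGroup E]
    [InnerProductSpace ℝ E] {g u w : E} {c K : ℝ} (hK : 0 ≤ K) (hw : ‖w‖ ≤ K * ‖u‖)
    (h : c * ‖u‖ ^ 2 ≤ ⟪g, w⟫) : c / (K + 1) * ‖u‖ ≤ ‖g‖ := by
  -- `K + 1` rather than `K`, so that no case split on `K = 0` is needed.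
  have hgw : c * ‖u‖ ^ 2 ≤ ‖g‖ * (K * ‖u‖) :=
    h.trans ((real_inner_le_norm g w).trans (by gcongr))
  rcases (norm_nonneg u).eq_or_lt with hu | hu
  · rw [← hu, mul_zero]; positivity
  rw [div_mul_eq_mul_div, div_le_iff₀ (by positivity)]
  nlinarith [mul_nonneg (norm_nonneg g) hu.le]

theorem gradient_growth_near_stationary_general {d : ℕ}
    (R : EuclideanSpace ℝ (Fin d) → ℝ) (hR : ContDiff ℝ 2 R)
    (H : EuclideanSpace ℝ (Fin d) → Matrix (Fin d) (Fin d) ℝ)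
    (hH : ∀ θ i j, H θ i j =
      iteratedFDeriv ℝ 2 R θ ![EuclideanSpace.single i 1, EuclideanSpace.single j 1])
    (θt : EuclideanSpace ℝ (Fin d))
    (hgrad : gradient R θt = 0)
    (r c : ℝ) (hc : 0 < c)
    (h1 : ∀ θ ∈ Metric.closedBall θt r, ∀ v : Fin d → ℝ,
      c * (∑ i, (v i) ^ 2) ≤ v ⬝ᵥ ((H θ)ᵀ * (H θt)⁻¹) *ᵥ v) :
    ∃ c₀ > 0, ∀ θ ∈ Metric.closedBall θt r, c₀ * ‖θ - θt‖ ≤ ‖gradient R θ‖ := by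
  set A := toEuclideanCLM (𝕜 := ℝ) (H θt)⁻¹
  refine ⟨c / (‖A‖ + 1), by positivity, fun θ hθ ↦ ?_⟩
  set u := θ - θt
  obtain ⟨z, hz, hmvt⟩ := exists_fderiv_sub_eq_fderiv_fderiv
    ((hR.fderiv_right (m := 1) le_rfl).differentiable one_ne_zero) θt θ (A u)
  have hz_mem : z ∈ closedBall θt r :=
    (convex_closedBall θt r).segment_subset (mem_closedBall_self (dist_nonneg.trans hθ)) hθ hz
  have key : c * ‖u‖ ^ 2 ≤ ⟪gradient R θ, A u⟫ := calc
    c * ‖u‖ ^ 2 = c * ∑ i, u i ^ 2 := by simp [EuclideanSpace.norm_sq_eq]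
    _ ≤ WithLp.ofLp u ⬝ᵥ ((H z)ᵀ * (H θt)⁻¹) *ᵥ WithLp.ofLp u := h1 z hz_mem _
    _ = fderiv ℝ (fderiv ℝ R) z u (A u) := by
      rw [transpose_hessian hR.contDiffAt (hH z), ← mulVec_mulVec,
        fderiv_fderiv_apply_eq_dotProduct_hessian (hH z), ofLp_toEuclideanCLM]
    _ = ⟪gradient R θ, A u⟫ := by
      rw [← hmvt, ← inner_gradient_left, ← inner_gradient_left (x := θt), hgrad,
        inner_zero_left, sub_zero]
  exact le_norm_of_mul_norm_sq_le_inner (norm_nonneg A) (A.le_opNorm u) key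

/-- Growth of the gradient near an isolated stationary point (Lemma 2, statement 1):
if on `B_r(θ̃)` the Hessian `H_θ` of a `C²` function `R` satisfies
`H_θᵀ H_θ̃⁻¹ ≽ c I` and `H_θᵀ H_θ ≽ c I`, and `∇R(θ̃) = 0`, then
`‖∇R(θ)‖ ≥ c₀ ‖θ - θ̃‖` on `B_r(θ̃)` for some `c₀ > 0`. -/
theorem gradient_growth_near_stationary {d : ℕ}
    (R : EuclideanSpace ℝ (Fin d) → ℝ) (hR : ContDiff ℝ 2 R)
    (H : EuclideanSpace ℝ (Fin d) → Matrix (Fin d) (Fin d) ℝ)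
    (hH : ∀ θ i j, H θ i j =
      iteratedFDeriv ℝ 2 R θ ![EuclideanSpace.single i 1, EuclideanSpace.single j 1])
    (Θ : Set (EuclideanSpace ℝ (Fin d))) (θt : EuclideanSpace ℝ (Fin d))
    (hθt : θt ∈ interior Θ) (hgrad : gradient R θt = 0)
    (r c : ℝ) (hr : 0 < r) (hc : 0 < c)
    (hball : Metric.closedBall θt r ⊆ Θ)
    (hinv : IsUnit (H θt))
    (h1 : ∀ θ ∈ Metric.closedBall θt r, ∀ v : Fin d → ℝ,
      c * (∑ i, (v i) ^ 2) ≤ v ⬝ᵥ ((H θ)ᵀ * (H θt)⁻¹) *ᵥ v)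
    (h2 : ∀ θ ∈ Metric.closedBall θt r, ∀ v : Fin d → ℝ,
      c * (∑ i, (v i) ^ 2) ≤ v ⬝ᵥ ((H θ)ᵀ * (H θ)) *ᵥ v) :
    ∃ c₀ > 0, ∀ θ ∈ Metric.closedBall θt r, c₀ * ‖θ - θt‖ ≤ ‖gradient R θ‖ :=
  gradient_growth_near_stationary_general R hR H hH θt hgrad r c hc h1
end

section
/- Fix λ > 0 and let (X̃, Y) be a random pair with X̃ ∈ ℝ^d bounded and Y ∈ {-1, 1}, such that for each sign s ∈ {-1,1} and each coordinate j, the conditional density of X̃_j given X̃_{-j} and Y = s exists and is bounded. Define the population SVM risk R(θ) = (λ/2)‖θ‖₂² + E[max(0, 1 - Y θ^T X̃)]. Then for θ with all coordinates nonzero, R is differentiable at θ with ∇R(θ) = λθ - E[Y · 1{Y θ^T X̃ ≤ 1} · X̃]. -/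
/-!
The hinge loss `t ↦ max 0 (1 - t)` is 1-Lipschitz and differentiable away from `t = 1`, so
differentiation under the integral sign (dominated by the bound on `‖X‖`) shows that
`θ ↦ E[max 0 (1 - ⟪θ, Y X⟫)]` has gradient `-E[1{⟪θ, Y X⟫ ≤ 1} Y X]` as soon as the kink
event `{⟪θ, Y X⟫ = 1}` is null. Since `θ j ≠ 0`, on `{Y = s}` that event says that `X j` is an
affine function `c` of the other coordinates. Cutting the real line into intervals `I` of length
`ε` and using the conditional density bound of `X j` on each `{c(X_{-j}) ∈ I, X j ∈ I}` bounds its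
probability by `K ε`, for every `ε > 0`.
-/

open MeasureTheory Set Filter Topology Function
open scoped RealInnerProductSpace

section GraphNull

variable {Ω α : Type*} [MeasurableSpace Ω] [MeasurableSpace α] {ν : Measure Ω}
  {Z : Ω → α} {W : Ω → ℝ} {κ : α → Measure ℝ} {K : ℝ} {c : α → ℝ}

lemma measure_setOf_eq_comp_le (hc : Measurable c)
    (hdis : ∀ A B, MeasurableSet A → MeasurableSet B →
      ν {ω | Z ω ∈ A ∧ W ω ∈ B} = ∫⁻ x in A, κ x B ∂ν.map Z)
    (hdens : ∀ x a b, a ≤ b → κ x (Ioc a b) ≤ ENNReal.ofReal (K * (b - a)))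
    {ε : ℝ} (hε : 0 < ε) :
    ν {ω | W ω = c (Z ω)} ≤ ENNReal.ofReal (K * ε) * ν.map Z univ := by
  set I : ℤ → Set ℝ := fun n => Ioc (n • ε) ((n + 1) • ε)
  have hI_disj : Pairwise (Disjoint on fun n => c ⁻¹' I n) := fun m n hmn =>
    ((by simpa only [zero_add] using pairwise_disjoint_Ioc_add_zsmul (0 : ℝ) ε :
      Pairwise (Disjoint on I)) hmn).preimage c
  have hI_len : ∀ x n, κ x (I n) ≤ ENNReal.ofReal (K * ε) := fun x n =>
    (hdens x _ _ (by rw [add_smul, one_smul]; linarith)).trans_eq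
      (by rw [add_smul, one_smul, add_sub_cancel_left])
  calc ν {ω | W ω = c (Z ω)}
      ≤ ν (⋃ n, {ω | Z ω ∈ c ⁻¹' I n ∧ W ω ∈ I n}) := by
        refine measure_mono fun ω hω => ?_
        obtain ⟨n, hn⟩ := mem_iUnion.mp ((iUnion_Ioc_zsmul hε).symm ▸ mem_univ (c (Z ω)))
        exact mem_iUnion.mpr ⟨n, hn, (show W ω = c (Z ω) from hω) ▸ hn⟩
    _ ≤ ∑' n, ν {ω | Z ω ∈ c ⁻¹' I n ∧ W ω ∈ I n} := measure_iUnion_le _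
    _ = ∑' n, ∫⁻ x in c ⁻¹' I n, κ x (I n) ∂ν.map Z :=
        tsum_congr fun n => hdis _ _ (hc measurableSet_Ioc) measurableSet_Ioc
    _ ≤ ∑' n, ENNReal.ofReal (K * ε) * ν.map Z (c ⁻¹' I n) := ENNReal.tsum_le_tsum fun n =>
        (lintegral_mono fun x => hI_len x n).trans_eq (setLIntegral_const _ _)
    _ = ENNReal.ofReal (K * ε) * ν.map Z univ := by
        rw [ENNReal.tsum_mul_left, ← measure_iUnion hI_disj fun n => hc measurableSet_Ioc,
          ← preimage_iUnion, iUnion_Ioc_zsmul hε, preimage_univ]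

lemma measure_setOf_eq_comp_eq_zero [IsFiniteMeasure ν] (hc : Measurable c)
    (hdis : ∀ A B, MeasurableSet A → MeasurableSet B →
      ν {ω | Z ω ∈ A ∧ W ω ∈ B} = ∫⁻ x in A, κ x B ∂ν.map Z)
    (hdens : ∀ x a b, a ≤ b → κ x (Ioc a b) ≤ ENNReal.ofReal (K * (b - a))) :
    ν {ω | W ω = c (Z ω)} = 0 := by
  have hKε : Tendsto (fun ε => K * ε) (𝓝[>] 0) (𝓝 0) := by
    simpa using ((continuous_const_mul K).tendsto 0).mono_left nhdsWithin_le_nhds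
  have hlim : Tendsto (fun ε => ENNReal.ofReal (K * ε) * ν.map Z univ) (𝓝[>] 0) (𝓝 0) := by
    simpa using
      ENNReal.Tendsto.mul_const (ENNReal.tendsto_ofReal hKε) (.inr (measure_ne_top _ _))
  exact nonpos_iff_eq_zero.mp <| ge_of_tendsto hlim <| eventually_nhdsWithin_of_forall
    fun ε hε => measure_setOf_eq_comp_le hc hdis hdens hε

end GraphNull

section Hinge

lemma hasDerivAt_hinge {t : ℝ} (ht : t ≠ 1) :
    HasDerivAt (fun t : ℝ => max 0 (1 - t)) (-if t ≤ 1 then 1 else 0) t := by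
  rcases ht.lt_or_gt with ht | ht
  · rw [if_pos ht.le]
    refine ((hasDerivAt_id t).const_sub 1).congr_of_eventuallyEq ?_
    filter_upwards [Iio_mem_nhds ht] with u hu
    exact max_eq_right (by simp only [mem_Iio] at hu; linarith)
  · rw [if_neg ht.not_ge, neg_zero]
    refine (hasDerivAt_const t (0 : ℝ)).congr_of_eventuallyEq ?_
    filter_upwards [Ioi_mem_nhds ht] with u hu
    exact max_eq_left (by simp only [mem_Ioi] at hu; linarith)

lemma abs_hinge_sub_hinge_le (a b : ℝ) : |max 0 (1 - a) - max 0 (1 - b)| ≤ |a - b| := by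
  rw [max_comm 0, max_comm 0]
  calc _ ≤ |(1 - a) - (1 - b)| := abs_max_sub_max_le_abs _ _ _
    _ = |a - b| := by rw [sub_sub_sub_cancel_left, abs_sub_comm]

variable {E : Type*} [NormedAddCommGroup E] [InnerProductSpace ℝ E] [CompleteSpace E]

lemma hasGradientAt_hinge_inner {z θ : E} (h : ⟪θ, z⟫ ≠ 1) :
    HasGradientAt (fun x => max 0 (1 - ⟪x, z⟫)) (-((if ⟪θ, z⟫ ≤ 1 then 1 else 0 : ℝ) • z)) θ := by
  have hlin : HasFDerivAt (fun x : E => ⟪x, z⟫) (InnerProductSpace.toDual ℝ E z) θ := by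
    convert (InnerProductSpace.toDual ℝ E z).hasFDerivAt using 1
    ext x
    exact real_inner_comm _ _
  rw [hasGradientAt_iff_hasFDerivAt]
  refine ((hasDerivAt_hinge h).comp_hasFDerivAt θ hlin).congr_fderiv ?_
  ext y
  split_ifs <;> simp [InnerProductSpace.toDual_apply_apply]

variable {Ω : Type*} [MeasurableSpace Ω] {μ : Measure Ω} [IsFiniteMeasure μ]

lemma hasGradientAt_integral_hinge_inner {Z : Ω → E} (hZ : AEStronglyMeasurable Z μ) {M : ℝ}
    (hZM : ∀ᵐ ω ∂μ, ‖Z ω‖ ≤ M) {θ : E} (hkink : μ {ω | ⟪θ, Z ω⟫ = 1} = 0) :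
    HasGradientAt (fun x => ∫ ω, max 0 (1 - ⟪x, Z ω⟫) ∂μ)
      (-∫ ω, (if ⟪θ, Z ω⟫ ≤ 1 then 1 else 0 : ℝ) • Z ω ∂μ) θ := by
  set G : Ω → E := fun ω => -((if ⟪θ, Z ω⟫ ≤ 1 then 1 else 0 : ℝ) • Z ω)
  have hinner : ∀ x : E, AEStronglyMeasurable (fun ω => ⟪x, Z ω⟫) μ := fun x =>
    aestronglyMeasurable_const.inner hZ
  have hhinge : ∀ x : E, AEStronglyMeasurable (fun ω => max 0 (1 - ⟪x, Z ω⟫)) μ := fun x =>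
    (continuous_const.max (continuous_const.sub continuous_id)).comp_aestronglyMeasurable
      (hinner x)
  have hG : AEStronglyMeasurable G μ :=
    ((((measurable_const.ite measurableSet_Iic measurable_const).comp_aemeasurable
      (hinner θ).aemeasurable).aestronglyMeasurable).smul hZ).neg
  have hGM : ∀ᵐ ω ∂μ, ‖G ω‖ ≤ M := hZM.mono fun ω hω => by
    refine (norm_neg _).trans_le <| (norm_smul_le _ _).trans (le_trans ?_ hω)
    split_ifs <;> simp
  have hG_int : Integrable G μ := .of_bound hG M hGM
  have hlip : ∀ᵐ ω ∂μ, ∀ x ∈ univ,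
      ‖max 0 (1 - ⟪x, Z ω⟫) - max 0 (1 - ⟪θ, Z ω⟫)‖ ≤ M * ‖x - θ‖ := hZM.mono fun ω hω x _ =>
    calc _ ≤ |⟪x, Z ω⟫ - ⟪θ, Z ω⟫| := abs_hinge_sub_hinge_le _ _
      _ = |⟪x - θ, Z ω⟫| := by rw [inner_sub_left]
      _ ≤ ‖x - θ‖ * ‖Z ω‖ := abs_real_inner_le_norm _ _
      _ ≤ M * ‖x - θ‖ := by rw [mul_comm]; exact mul_le_mul_of_nonneg_right hω (norm_nonneg _)
  have hderiv : ∀ᵐ ω ∂μ, HasFDerivAt (fun x => max 0 (1 - ⟪x, Z ω⟫))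
      (InnerProductSpace.toDual ℝ E (G ω)) θ := by
    refine (measure_eq_zero_iff_ae_notMem.mp hkink).mono fun ω hω => ?_
    exact hasGradientAt_iff_hasFDerivAt.mp (hasGradientAt_hinge_inner hω)
  have hint : Integrable (fun ω => max 0 (1 - ⟪θ, Z ω⟫)) μ :=
    .of_bound (hhinge θ) (1 + ‖θ‖ * M) <| hZM.mono fun ω hω => by
      have := (abs_real_inner_le_norm θ (Z ω)).trans
        (mul_le_mul_of_nonneg_left hω (norm_nonneg θ))
      rw [Real.norm_of_nonneg (le_max_left _ _)]
      exact max_le (by linarith [abs_nonneg ⟪θ, Z ω⟫]) (by linarith [neg_abs_le ⟪θ, Z ω⟫])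
  obtain ⟨hF'_int, h⟩ := hasFDerivAt_integral_of_dominated_loc_of_lip' univ_mem
    (fun x _ => hhinge x) hint
    ((InnerProductSpace.toDual ℝ E).continuous.comp_aestronglyMeasurable hG) hlip
    (integrable_const M) hderiv
  rw [hasGradientAt_iff_hasFDerivAt]
  refine h.congr_fderiv ?_
  ext y
  rw [ContinuousLinearMap.integral_apply hF'_int, ← integral_neg]
  simp_rw [InnerProductSpace.toDual_apply_apply, real_inner_comm y]
  exact integral_inner hG_int y

lemma HasGradientAt.half_mul_norm_sq_add {f : E → ℝ} {g θ : E} (hf : HasGradientAt f g θ)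
    (c : ℝ) : HasGradientAt (fun x => c / 2 * ‖x‖ ^ 2 + f x) (c • θ + g) θ := by
  rw [hasGradientAt_iff_hasFDerivAt] at hf ⊢
  refine (((hasStrictFDerivAt_norm_sq θ).hasFDerivAt.const_mul (c / 2)).add hf).congr_fderiv ?_
  ext y
  simp only [add_apply, smul_apply, coe_innerSL_apply,
    nsmul_eq_mul, smul_eq_mul, InnerProductSpace.toDual_apply_apply, map_add, map_smul]
  ring

end Hinge

section SVM

lemma inner_eq_mul_add_sum_subtype_ne {ι : Type*} [Fintype ι] [DecidableEq ι]
    (θ x : EuclideanSpace ℝ ι) (j : ι) :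
    ⟪θ, x⟫ = θ j * x j + ∑ k : {k // k ≠ j}, θ k * x k := by
  simp [PiLp.inner_apply, Fintype.sum_eq_add_sum_subtype_ne _ j, mul_comm]

variable {Ω : Type*} [MeasurableSpace Ω] {μ : Measure Ω} [IsFiniteMeasure μ] {d : ℕ}
  {X : Ω → EuclideanSpace ℝ (Fin d)} {Y : Ω → ℝ}

lemma measure_label_eq_and_inner_eq_eq_zero (hY : Measurable Y) {s t K : ℝ} {j : Fin d}
    {κ : ({k : Fin d // k ≠ j} → ℝ) → Measure ℝ}
    (hdis : ∀ (A : Set ({k : Fin d // k ≠ j} → ℝ)) (B : Set ℝ),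
        MeasurableSet A → MeasurableSet B →
        μ {ω | Y ω = s ∧ (fun k : {k : Fin d // k ≠ j} => X ω k) ∈ A ∧ X ω j ∈ B}
          = ∫⁻ x in A, κ x B
              ∂(Measure.map (fun ω (k : {k : Fin d // k ≠ j}) => X ω k)
                  (μ.restrict {ω | Y ω = s})))
    (hdens : ∀ x a b, a ≤ b → κ x (Ioc a b) ≤ ENNReal.ofReal (K * (b - a)))
    {θ : EuclideanSpace ℝ (Fin d)} (hθ : θ j ≠ 0) :
    μ {ω | Y ω = s ∧ ⟪θ, X ω⟫ = t} = 0 := by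
  set c : ({k : Fin d // k ≠ j} → ℝ) → ℝ := fun x =>
    (t - ∑ k : {k : Fin d // k ≠ j}, θ k * x k) / θ j
  have hc : Measurable c := by fun_prop
  have hS : MeasurableSet {ω | Y ω = s} := hY (measurableSet_singleton s)
  have hset : {ω | Y ω = s ∧ ⟪θ, X ω⟫ = t}
      = {ω | X ω j = c (fun k => X ω k)} ∩ {ω | Y ω = s} := by
    ext ω
    simp only [mem_ofPred_eq, mem_inter_iff, c, eq_div_iff hθ,
      inner_eq_mul_add_sum_subtype_ne _ _ j]
    constructor
    · rintro ⟨hs, ht⟩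
      exact ⟨by linarith, hs⟩
    · rintro ⟨ht, hs⟩
      exact ⟨hs, by linarith⟩
  rw [hset, ← Measure.restrict_apply' hS]
  refine measure_setOf_eq_comp_eq_zero hc (fun A B hA hB => ?_) hdens
  rw [Measure.restrict_apply' hS, ← hdis A B hA hB]
  congr 1
  ext ω
  simp only [mem_ofPred_eq, mem_inter_iff]
  tauto

lemma measure_inner_label_smul_eq_one_eq_zero (hY : Measurable Y)
    (hYsign : ∀ ω, Y ω = 1 ∨ Y ω = -1) {K : ℝ}
    {κ : ℝ → (j : Fin d) → (({k : Fin d // k ≠ j} → ℝ) → Measure ℝ)}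
    (hdis : ∀ s : ℝ, (s = 1 ∨ s = -1) → ∀ j : Fin d,
      ∀ (A : Set ({k : Fin d // k ≠ j} → ℝ)) (B : Set ℝ),
        MeasurableSet A → MeasurableSet B →
        μ {ω | Y ω = s ∧ (fun k : {k : Fin d // k ≠ j} => X ω k) ∈ A ∧ X ω j ∈ B}
          = ∫⁻ x in A, κ s j x B
              ∂(Measure.map (fun ω (k : {k : Fin d // k ≠ j}) => X ω k)
                  (μ.restrict {ω | Y ω = s})))
    (hdens : ∀ (s : ℝ) (j : Fin d) (x : {k : Fin d // k ≠ j} → ℝ), ∀ a b : ℝ, a ≤ b →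
      κ s j x (Ioc a b) ≤ ENNReal.ofReal (K * (b - a)))
    {θ : EuclideanSpace ℝ (Fin d)} (hθ : ∀ j, θ j ≠ 0) :
    μ {ω | ⟪θ, Y ω • X ω⟫ = 1} = 0 := by
  rcases isEmpty_or_nonempty (Fin d) with hd | ⟨⟨j⟩⟩
  · simp [Subsingleton.elim θ 0]
  refine measure_mono_null (fun ω hω => ?_) (measure_union_null
    (measure_label_eq_and_inner_eq_eq_zero (t := 1) hY (hdis 1 (.inl rfl) j) (hdens 1 j)
      (hθ j))
    (measure_label_eq_and_inner_eq_eq_zero (t := -1) hY (hdis (-1) (.inr rfl) j) (hdens (-1) j)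
      (hθ j)))
  replace hω : Y ω * ⟪θ, X ω⟫ = 1 := by rwa [← real_inner_smul_right]
  rcases hYsign ω with h | h <;> rw [h] at hω
  · exact .inl ⟨h, by linarith⟩
  · exact .inr ⟨h, by linarith⟩

end SVM

theorem svm_risk_gradient_general
    {Ω : Type*} [MeasurableSpace Ω] (μ : Measure Ω) [IsProbabilityMeasure μ]
    {d : ℕ} (X : Ω → EuclideanSpace ℝ (Fin d)) (Y : Ω → ℝ)
    (hX : Measurable X) (hY : Measurable Y)
    (M K lam : ℝ)
    (hXbdd : ∀ᵐ ω ∂μ, ‖X ω‖ ≤ M)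
    (hYsign : ∀ ω, Y ω = 1 ∨ Y ω = -1)
    (κ : ℝ → (j : Fin d) → (({k : Fin d // k ≠ j} → ℝ) → Measure ℝ))
    (hdis : ∀ s : ℝ, (s = 1 ∨ s = -1) → ∀ j : Fin d,
      ∀ (A : Set ({k : Fin d // k ≠ j} → ℝ)) (B : Set ℝ),
        MeasurableSet A → MeasurableSet B →
        μ {ω | Y ω = s ∧ (fun k : {k : Fin d // k ≠ j} => X ω k) ∈ A ∧ X ω j ∈ B}
          = ∫⁻ x in A, κ s j x B
              ∂(Measure.map (fun ω (k : {k : Fin d // k ≠ j}) => X ω k)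
                  (μ.restrict {ω | Y ω = s})))
    (hdens : ∀ (s : ℝ) (j : Fin d) (x : {k : Fin d // k ≠ j} → ℝ), ∀ a b : ℝ, a ≤ b →
      κ s j x (Set.Ioc a b) ≤ ENNReal.ofReal (K * (b - a)))
    (R : EuclideanSpace ℝ (Fin d) → ℝ)
    (hR : ∀ θ, R θ = lam / 2 * ‖θ‖ ^ 2 + ∫ ω, max 0 (1 - Y ω * (inner ℝ θ (X ω) : ℝ)) ∂μ) :
    ∀ θ : EuclideanSpace ℝ (Fin d), (∀ j, θ j ≠ 0) →
      HasGradientAt R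
        (lam • θ - ∫ ω, (Y ω * if Y ω * (inner ℝ θ (X ω) : ℝ) ≤ 1 then 1 else 0) • X ω ∂μ)
        θ := by
  intro θ hθ
  have hYX : ∀ᵐ ω ∂μ, ‖Y ω • X ω‖ ≤ M := hXbdd.mono fun ω hω => by
    rcases hYsign ω with h | h <;> simpa [h, norm_smul] using hω
  have hhinge := hasGradientAt_integral_hinge_inner (Z := fun ω => Y ω • X ω)
    (hY.smul hX).aestronglyMeasurable hYX
    (measure_inner_label_smul_eq_one_eq_zero hY hYsign hdis hdens hθ)
  have hR' : R = fun x => lam / 2 * ‖x‖ ^ 2 + ∫ ω, max 0 (1 - ⟪x, Y ω • X ω⟫) ∂μ := by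
    funext x
    simp_rw [hR, real_inner_smul_right]
  have hintegrand : (fun ω => (Y ω * if Y ω * ⟪θ, X ω⟫ ≤ 1 then 1 else 0) • X ω)
      = fun ω => (if ⟪θ, Y ω • X ω⟫ ≤ 1 then 1 else 0 : ℝ) • Y ω • X ω := by
    funext ω
    rw [real_inner_smul_right, smul_smul, mul_comm]
  rw [hR', sub_eq_add_neg, hintegrand]
  exact hhinge.half_mul_norm_sq_add lam

/-- Gradient of the population soft-margin SVM risk: with bounded covariates and
bounded conditional densities of each coordinate `X̃ⱼ` given the remaining coordinates
and the label `Y = s` (phrased via disintegration kernels `κ`), the risk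
`R(θ) = (λ/2)‖θ‖² + E[max(0, 1 - Yθᵀ X̃)]` is differentiable at every `θ` with all
coordinates nonzero, with gradient `λθ - E[Y·1{YθᵀX̃ ≤ 1}·X̃]`. -/
theorem svm_risk_gradient
    {Ω : Type*} [MeasurableSpace Ω] (μ : Measure Ω) [IsProbabilityMeasure μ]
    {d : ℕ} (X : Ω → EuclideanSpace ℝ (Fin d)) (Y : Ω → ℝ)
    (hX : Measurable X) (hY : Measurable Y)
    (M K lam : ℝ) (hM : 0 < M) (hK : 0 < K) (hlam : 0 < lam)
    (hXbdd : ∀ᵐ ω ∂μ, ‖X ω‖ ≤ M)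
    (hYsign : ∀ ω, Y ω = 1 ∨ Y ω = -1)
    (κ : ℝ → (j : Fin d) → (({k : Fin d // k ≠ j} → ℝ) → Measure ℝ))
    (hdis : ∀ s : ℝ, (s = 1 ∨ s = -1) → ∀ j : Fin d,
      ∀ (A : Set ({k : Fin d // k ≠ j} → ℝ)) (B : Set ℝ),
        MeasurableSet A → MeasurableSet B →
        μ {ω | Y ω = s ∧ (fun k : {k : Fin d // k ≠ j} => X ω k) ∈ A ∧ X ω j ∈ B}
          = ∫⁻ x in A, κ s j x B
              ∂(Measure.map (fun ω (k : {k : Fin d // k ≠ j}) => X ω k)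
                  (μ.restrict {ω | Y ω = s})))
    (hdens : ∀ (s : ℝ) (j : Fin d) (x : {k : Fin d // k ≠ j} → ℝ), ∀ a b : ℝ, a ≤ b →
      κ s j x (Set.Ioc a b) ≤ ENNReal.ofReal (K * (b - a)))
    (R : EuclideanSpace ℝ (Fin d) → ℝ)
    (hR : ∀ θ, R θ = lam / 2 * ‖θ‖ ^ 2 + ∫ ω, max 0 (1 - Y ω * (inner ℝ θ (X ω) : ℝ)) ∂μ) :
    ∀ θ : EuclideanSpace ℝ (Fin d), (∀ j, θ j ≠ 0) →
      HasGradientAt R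
        (lam • θ - ∫ ω, (Y ω * if Y ω * (inner ℝ θ (X ω) : ℝ) ≤ 1 then 1 else 0) • X ω ∂μ)
        θ :=
  svm_risk_gradient_general μ X Y hX hY M K lam hXbdd hYsign κ hdis hdens R hR
end
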